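/- Let E = {a_j : j ∈ ℕ} ⊆ [0,1] where (a_j) is a sequence whose gaps a_j − a_{j+1} form a positive nonincreasing sequence (a sequence with decreasing gaps). Then dim_qA E = 1 if \overline{dim}_B E > 0, and dim_qA E = 0 if \overline{dim}_B E = 0. -/

import Mathlib

/-!
In `ℝ` a ball of radius `R` needs at most `2R/r` balls of radius `r`, so `h̄_E(δ) ≤ 1`. If
`dim_B E = 0`, then `N_{r,R}(E) ≤ N_r(E) ≤ r^{-ε}` for every `ε > 0` and small `r`, and
`r ≤ R^{1+δ}` gives `r^{-αδ/(1+δ)} ≤ (R/r)^α`; hence `h̄_E(δ) = 0` for all `δ > 0`.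

If `dim_B E > ε > 0`, pick arbitrarily small `r` with `N_r(E) ≥ r^{-ε}`, and let `m` be the first
index whose gap is at most `r`; then `N_r(E) ≤ m + 2 + (a_m - inf a)/(2r)`, so one of two things
happens. Either the tail `[inf a, a_m]`, in which `E` is `r`-dense, has length `≥ r^{1-ε}`: then
the ball of radius `R = r^{1-ε/2}` at `a_m` needs `≥ R/(4r)` balls of radius `r`. Or `m ≥ r^{-ε}/4`
gaps exceed `r`: pigeonholing the ratios of the gaps at the dyadic indices `2^I, …, 4^I` with
`2^I ≈ r^{-ε/4}` gives a block `a_n, …, a_{2n}` whose gaps are all comparable to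
`g = a_{2n} - a_{2n+1}`, i.e. `n + 1` points, `g`-separated, in a ball of radius `R ≈ ng`.
Either way `N_{r',R}(E) ≳ R/r'` with `r' ≤ R^{1+ε/4}` and `R/r' → ∞`, which excludes every
exponent `α < 1` from `h̄_E(ε/4)`.
-/

open Metric Filter Set
open scoped ENNReal

/-- `N_r(A)`: the least number of closed balls of radius `r` needed to cover `A`. -/
noncomputable def coverNum {X : Type*} [PseudoMetricSpace X] (A : Set X) (r : ℝ) : ℕ :=
  sInf {n : ℕ | ∃ S : Finset X, S.card = n ∧ A ⊆ ⋃ x ∈ S, closedBall x r}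

/-- `N_{r,R}(E) = sup_{x ∈ E} N_r(E ∩ B(x,R))`. -/
noncomputable def coverNumLoc {X : Type*} [PseudoMetricSpace X] (E : Set X) (r R : ℝ) : ℕ :=
  sSup {n : ℕ | ∃ x ∈ E, n = coverNum (E ∩ closedBall x R) r}

/-- Upper box dimension `limsup_{r → 0⁺} log N_r(E) / log (1/r)`. -/
noncomputable def upperBoxDim {X : Type*} [PseudoMetricSpace X] (E : Set X) : ℝ :=
  limsup (fun r : ℝ => Real.log (coverNum E r) / Real.log (1 / r)) (nhdsWithin 0 (Ioi 0))

/-- Lower box dimension `liminf_{r → 0⁺} log N_r(E) / log (1/r)`. -/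
noncomputable def lowerBoxDim {X : Type*} [PseudoMetricSpace X] (E : Set X) : ℝ :=
  liminf (fun r : ℝ => Real.log (coverNum E r) / Real.log (1 / r)) (nhdsWithin 0 (Ioi 0))

/-- `h̄_E(δ)`: the infimum of all `α ≥ 0` such that for some `b, c > 0`,
`N_{r,R}(E) ≤ c (R/r)^α` whenever `0 < r ≤ R^{1+δ} ≤ R ≤ b`. -/
noncomputable def hUpper {X : Type*} [PseudoMetricSpace X] (E : Set X) (δ : ℝ) : ℝ :=
  sInf {α : ℝ | 0 ≤ α ∧ ∃ b c : ℝ, 0 < b ∧ 0 < c ∧ ∀ r R : ℝ,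
    0 < r → r ≤ R ^ (1 + δ) → R ^ (1 + δ) ≤ R → R ≤ b →
    (coverNumLoc E r R : ℝ) ≤ c * (R / r) ^ α}

/-- `h̲_E(δ)`: the supremum of all `α ≥ 0` such that for some `b, c > 0`,
`N_{r,R}(E) ≥ c (R/r)^α` whenever `0 < r ≤ R^{1+δ} ≤ R ≤ b`. -/
noncomputable def hLower {X : Type*} [PseudoMetricSpace X] (E : Set X) (δ : ℝ) : ℝ :=
  sSup {α : ℝ | 0 ≤ α ∧ ∃ b c : ℝ, 0 < b ∧ 0 < c ∧ ∀ r R : ℝ,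
    0 < r → r ≤ R ^ (1 + δ) → R ^ (1 + δ) ≤ R → R ≤ b →
    c * (R / r) ^ α ≤ (coverNumLoc E r R : ℝ)}

/-- The quasi-Assouad dimension `dim_qA E = lim_{δ → 0⁺} h̄_E(δ)`; since `h̄_E` is
nonincreasing this limit equals the supremum over `δ ∈ (0,1)`. -/
noncomputable def qADim {X : Type*} [PseudoMetricSpace X] (E : Set X) : ℝ :=
  sSup (hUpper E '' Ioo (0:ℝ) 1)

/-- The quasi-lower Assouad dimension `dim_qL E = lim_{δ → 0⁺} h̲_E(δ)`; since `h̲_E` is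
nondecreasing this limit equals the infimum over `δ ∈ (0,1)`. -/
noncomputable def qLDim {X : Type*} [PseudoMetricSpace X] (E : Set X) : ℝ :=
  sInf (hLower E '' Ioo (0:ℝ) 1)

/-- Assouad dimension `dim_A E = h̄_E(0)`. -/
noncomputable def assouadDim {X : Type*} [PseudoMetricSpace X] (E : Set X) : ℝ := hUpper E 0

/-- Lower (Assouad) dimension `dim_L E = h̲_E(0)`. -/
noncomputable def lowerAssouadDim {X : Type*} [PseudoMetricSpace X] (E : Set X) : ℝ := hLower E 0

open Topology

theorem le_rpow_of_log_div_log_le {x y ε : ℝ} (hx : 1 < x) (hy : 0 ≤ y)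
    (h : Real.log y / Real.log x ≤ ε) : y ≤ x ^ ε := by
  rcases hy.eq_or_lt with rfl | hy
  · positivity
  · rwa [div_le_iff₀ (Real.log_pos hx), ← Real.le_rpow_iff_log_le hy (by linarith)] at h

theorem log_div_log_le_of_le_rpow {x y ε : ℝ} (hx : 1 < x) (hy : 0 ≤ y) (hε : 0 ≤ ε)
    (h : y ≤ x ^ ε) : Real.log y / Real.log x ≤ ε := by
  rw [div_le_iff₀ (Real.log_pos hx)]
  rcases hy.eq_or_lt with rfl | hy
  · rw [Real.log_zero]; exact mul_nonneg hε (Real.log_pos hx).le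
  · rwa [← Real.le_rpow_iff_log_le hy (by linarith)]

theorem eventually_le_one_div_rpow {s : ℝ} (hs : 0 < s) (K : ℝ) :
    ∀ᶠ r in 𝓝[>] (0 : ℝ), K ≤ (1 / r) ^ s := by
  simpa only [one_div, Function.comp_def] using
    ((tendsto_rpow_atTop hs).comp tendsto_inv_nhdsGT_zero).eventually_ge_atTop K

theorem one_div_rpow_le_div_rpow {r R δ α : ℝ} (hr : 0 < r) (hR : 0 < R) (hδ : 0 ≤ δ)
    (hα : 0 ≤ α) (h : r ≤ R ^ (1 + δ)) : (1 / r) ^ (α * δ / (1 + δ)) ≤ (R / r) ^ α := by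
  have hδ' : 0 < 1 + δ := by linarith
  have hroot : r ^ (1 + δ)⁻¹ ≤ R := by
    simpa [Real.rpow_rpow_inv hR.le hδ'.ne'] using
      Real.rpow_le_rpow hr.le h (inv_nonneg.2 hδ'.le)
  have hbase : (1 / r) ^ (δ / (1 + δ)) ≤ R / r := by
    have hpow : (1 / r) ^ (δ / (1 + δ)) = r ^ (1 + δ)⁻¹ / r := by
      rw [← Real.rpow_sub_one hr.ne', one_div, Real.inv_rpow hr.le, ← Real.rpow_neg hr.le]
      congr 1
      field_simp
      ring
    rw [hpow]
    gcongr
  calc (1 / r) ^ (α * δ / (1 + δ)) = ((1 / r) ^ (δ / (1 + δ))) ^ α := by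
        rw [← Real.rpow_mul (by positivity)]; ring_nf
    _ ≤ (R / r) ^ α := Real.rpow_le_rpow (by positivity) hbase hα

theorem exists_le_mul_succ_of_lt_pow_mul {f : ℕ → ℝ} {C : ℝ} (hC : 0 ≤ C) {i₀ k : ℕ}
    (h : f i₀ < C ^ k * f (i₀ + k)) : ∃ i, i₀ ≤ i ∧ i < i₀ + k ∧ f i ≤ C * f (i + 1) := by
  by_contra! hf
  suffices ∀ l ≤ k, C ^ l * f (i₀ + l) ≤ f i₀ from (this k le_rfl).not_gt h
  intro l hl
  induction l with
  | zero => simp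
  | succ l ih =>
    calc C ^ (l + 1) * f (i₀ + (l + 1)) = C ^ l * (C * f (i₀ + l + 1)) := by ring_nf
      _ ≤ C ^ l * f (i₀ + l) :=
          mul_le_mul_of_nonneg_left (hf _ (by omega) (by omega)).le (pow_nonneg hC l)
      _ ≤ f i₀ := ih (by omega)

theorem exists_pow_two_scale {ε x : ℝ} (hε : 0 < ε) (hx : 0 < x) (hy : 5 ≤ x ^ (ε / 4)) :
    ∃ I : ℕ, x ^ (ε / 4) ≤ 2 ^ I ∧ (4 : ℝ) ^ I < x ^ ε / 4 ∧ x ^ (2 : ℝ) ≤ (2 ^ (8 / ε)) ^ I := by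
  set y := x ^ (ε / 4)
  obtain ⟨k, hky, hk⟩ := exists_nat_pow_near (x := y) (y := (2 : ℝ)) (by linarith) one_lt_two
  refine ⟨k + 1, hk.le, ?_, ?_⟩
  · calc (4 : ℝ) ^ (k + 1) = 4 * (2 ^ k) ^ 2 := by
          rw [pow_succ, ← pow_mul, mul_comm k 2, pow_mul]; norm_num; ring
      _ ≤ 4 * y ^ 2 := by gcongr
      _ < y ^ 4 / 4 := by nlinarith [mul_le_mul hy hy (by norm_num) (by linarith)]
      _ = x ^ ε / 4 := by rw [← Real.rpow_natCast, ← Real.rpow_mul hx.le]; norm_num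
  · calc x ^ (2 : ℝ) = y ^ (8 / ε) := by
          rw [← Real.rpow_mul hx.le]; congr 1; field_simp; ring
      _ ≤ ((2 : ℝ) ^ (k + 1)) ^ (8 / ε) := Real.rpow_le_rpow (by positivity) hk.le (by positivity)
      _ = (2 ^ (8 / ε)) ^ (k + 1) := by
          rw [← Real.rpow_natCast, ← Real.rpow_mul zero_le_two, mul_comm, Real.rpow_mul zero_le_two,
            Real.rpow_natCast]

theorem sub_eq_sum_gap (a : ℕ → ℝ) (p n : ℕ) :
    a p - a (p + n) = ∑ t ∈ Finset.range n, (a (p + t) - a (p + t + 1)) :=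
  (Finset.sum_range_sub' (fun t => a (p + t)) n).symm

section Covering

variable {X : Type*} [PseudoMetricSpace X] {A B : Set X} {r : ℝ}

theorem coverNum_le_card (S : Finset X) (h : A ⊆ ⋃ x ∈ S, closedBall x r) :
    coverNum A r ≤ S.card :=
  Nat.sInf_le ⟨S, rfl, h⟩

theorem exists_finset_card_eq_coverNum (hA : TotallyBounded A) (hr : 0 < r) :
    ∃ S : Finset X, S.card = coverNum A r ∧ A ⊆ ⋃ x ∈ S, closedBall x r := by
  obtain ⟨t, -, ht, hcover⟩ := finite_approx_of_totallyBounded hA r hr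
  have hne : {n | ∃ S : Finset X, S.card = n ∧ A ⊆ ⋃ x ∈ S, closedBall x r}.Nonempty := by
    refine ⟨_, ht.toFinset, rfl, hcover.trans ?_⟩
    simp only [Finite.mem_toFinset]
    exact iUnion₂_mono fun _ _ => ball_subset_closedBall
  exact Nat.sInf_mem hne

theorem coverNum_mono (hAB : A ⊆ B) (hB : TotallyBounded B) (hr : 0 < r) :
    coverNum A r ≤ coverNum B r := by
  obtain ⟨S, hS, hcover⟩ := exists_finset_card_eq_coverNum hB hr
  exact hS ▸ coverNum_le_card S (hAB.trans hcover)

theorem coverNum_union_le (hA : TotallyBounded A) (hB : TotallyBounded B) (hr : 0 < r) :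
    coverNum (A ∪ B) r ≤ coverNum A r + coverNum B r := by
  classical
  obtain ⟨S, hS, hSA⟩ := exists_finset_card_eq_coverNum hA hr
  obtain ⟨T, hT, hTB⟩ := exists_finset_card_eq_coverNum hB hr
  calc coverNum (A ∪ B) r ≤ (S ∪ T).card := by
        refine coverNum_le_card _ ?_
        rw [Finset.set_biUnion_union]
        exact union_subset_union hSA hTB
    _ ≤ coverNum A r + coverNum B r := hS ▸ hT ▸ Finset.card_union_le S T

theorem coverNum_finset_le (S : Finset X) (hr : 0 ≤ r) : coverNum (S : Set X) r ≤ S.card :=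
  coverNum_le_card S fun _ hx => mem_biUnion hx (mem_closedBall_self hr)

theorem card_le_coverNum_of_pairwise (hA : TotallyBounded A) (hr : 0 < r) {T : Finset X}
    (hTA : ↑T ⊆ A) (hT : (T : Set X).Pairwise fun x y => 2 * r < dist x y) :
    T.card ≤ coverNum A r := by
  obtain ⟨S, hS, hcover⟩ := exists_finset_card_eq_coverNum hA hr
  rw [← hS]
  refine Finset.card_le_card_of_forall_subsingleton (fun t x => t ∈ closedBall x r)
    (fun t ht => by simpa using hcover (hTA ht)) fun x _ s ⟨hs, hsx⟩ t ⟨ht, htx⟩ => ?_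
  by_contra hst
  have hfar := hT hs ht hst
  have hnear := dist_triangle_right s t x
  linarith [mem_closedBall.1 hsx, mem_closedBall.1 htx]

theorem coverNumLoc_le_of_forall {E : Set X} {R : ℝ} {k : ℕ}
    (h : ∀ x ∈ E, coverNum (E ∩ closedBall x R) r ≤ k) : coverNumLoc E r R ≤ k :=
  csSup_le' <| by rintro _ ⟨x, hx, rfl⟩; exact h x hx

theorem coverNumLoc_le_coverNum {E : Set X} (hE : TotallyBounded E) (hr : 0 < r) (R : ℝ) :
    coverNumLoc E r R ≤ coverNum E r :=
  coverNumLoc_le_of_forall fun _ _ => coverNum_mono inter_subset_left hE hr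

theorem coverNum_le_coverNumLoc {E : Set X} (hE : TotallyBounded E) (hr : 0 < r) {x : X}
    (hx : x ∈ E) (R : ℝ) : coverNum (E ∩ closedBall x R) r ≤ coverNumLoc E r R :=
  le_csSup ⟨coverNum E r, by rintro _ ⟨y, -, rfl⟩; exact coverNum_mono inter_subset_left hE hr⟩
    ⟨x, hx, rfl⟩

end Covering

section RealLine

variable {A : Set ℝ} {u v r : ℝ}

theorem Icc_subset_iUnion_closedBall (hr : 0 < r) {k : ℕ} (hk : 0 < k)
    (hkuv : v - u ≤ 2 * k * r) :
    Icc u v ⊆ ⋃ i ∈ Finset.range k, closedBall (u + (2 * i + 1) * r) r := by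
  rintro y ⟨huy, hyv⟩
  set t := (y - u) / (2 * r)
  have ht0 : 0 ≤ t := div_nonneg (by linarith) (by linarith)
  have htk : t ≤ k := by rw [div_le_iff₀ (by linarith)]; linarith
  obtain ⟨i, hi⟩ : ∃ i, i = min ⌊t⌋₊ (k - 1) := ⟨_, rfl⟩
  have hi_le : (i : ℝ) ≤ t := hi ▸ (Nat.cast_le.2 (min_le_left _ _)).trans (Nat.floor_le ht0)
  have hle_i : t ≤ i + 1 := by
    rcases le_total ⌊t⌋₊ (k - 1) with h | h
    · rw [hi, min_eq_left h]; exact (Nat.lt_floor_add_one t).le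
    · rw [hi, min_eq_right h, Nat.cast_sub hk]; push_cast; linarith
  refine mem_biUnion (x := i) (Finset.mem_range.2 (by omega)) ?_
  rw [le_div_iff₀ (by linarith)] at hi_le
  rw [div_le_iff₀ (by linarith)] at hle_i
  rw [mem_closedBall, Real.dist_eq, abs_le]
  constructor <;> linarith

theorem coverNum_le_of_subset_Icc (hr : 0 < r) (huv : u ≤ v) (h : A ⊆ Icc u v) :
    (coverNum A r : ℝ) ≤ (v - u) / (2 * r) + 1 := by
  classical
  set t := (v - u) / (2 * r)
  have ht : 0 ≤ t := div_nonneg (by linarith) (by linarith)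
  obtain ⟨k, hk⟩ : ∃ k, k = max ⌈t⌉₊ 1 := ⟨_, rfl⟩
  have hkt : t ≤ k := hk ▸ (Nat.le_ceil t).trans (Nat.cast_le.2 (le_max_left _ _))
  have hcover := Icc_subset_iUnion_closedBall (u := u) (v := v) hr (k := k) (by omega)
    (by rw [div_le_iff₀ (by linarith)] at hkt; linarith)
  have hN : coverNum A r ≤ k := by
    refine (coverNum_le_card ((Finset.range k).image fun i : ℕ => u + (2 * i + 1) * r) ?_).trans
      (Finset.card_image_le.trans (Finset.card_range k).le)
    rw [Finset.set_biUnion_finset_image]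
    exact h.trans hcover
  have hk : (k : ℝ) ≤ t + 1 := by
    rcases le_total ⌈t⌉₊ 1 with h1 | h1
    · rw [hk, max_eq_right h1]; push_cast; linarith
    · rw [hk, max_eq_left h1]; exact (Nat.ceil_lt_add_one ht).le
  exact (Nat.cast_le.2 hN).trans hk

theorem sub_le_card_mul_of_Icc_subset (S : Finset ℝ) {ρ : ℝ} (hρ : 0 ≤ ρ)
    (h : Icc u v ⊆ ⋃ x ∈ S, closedBall x ρ) : v - u ≤ S.card * (2 * ρ) := by
  open MeasureTheory in
  calc v - u ≤ volume.real (Icc u v) := by rw [Real.volume_real_Icc]; exact le_max_left _ _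
    _ ≤ volume.real (⋃ x ∈ S, closedBall x ρ) :=
        measureReal_mono h (measure_biUnion_lt_top S.finite_toSet fun _ _ =>
          measure_closedBall_lt_top).ne
    _ ≤ ∑ x ∈ S, volume.real (closedBall x ρ) := measureReal_biUnion_finset_le _ _
    _ = S.card * (2 * ρ) := by simp [Real.volume_real_closedBall hρ]

theorem sub_le_coverNum_mul_of_dense (hA : TotallyBounded A) (hr : 0 < r)
    (hdense : ∀ y ∈ Icc u v, ∃ z ∈ A, dist y z ≤ r) : v - u ≤ coverNum A r * (4 * r) := by
  obtain ⟨S, hS, hcover⟩ := exists_finset_card_eq_coverNum hA hr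
  have hcover' : Icc u v ⊆ ⋃ x ∈ S, closedBall x (2 * r) := fun y hy => by
    obtain ⟨z, hzA, hyz⟩ := hdense y hy
    obtain ⟨x, hxS, hzx⟩ := mem_iUnion₂.1 (hcover hzA)
    exact mem_biUnion hxS
      (mem_closedBall.2 (by linarith [dist_triangle y z x, mem_closedBall.1 hzx]))
  have := sub_le_card_mul_of_Icc_subset S (by linarith) hcover'
  rw [← hS]
  linarith

theorem coverNumLoc_le_two_mul_div (E : Set ℝ) {R : ℝ} (hr : 0 < r) (hrR : r ≤ R) :
    (coverNumLoc E r R : ℝ) ≤ 2 * (R / r) := by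
  have hRr : 1 ≤ R / r := (one_le_div hr).2 hrR
  have hball : ∀ x ∈ E, (coverNum (E ∩ closedBall x R) r : ℝ) ≤ 2 * (R / r) := fun x _ => by
    have := coverNum_le_of_subset_Icc (A := E ∩ closedBall x R) (u := x - R) (v := x + R) hr
      (by linarith) (inter_subset_right.trans Real.closedBall_eq_Icc.le)
    rw [show x + R - (x - R) = 2 * R by ring, mul_div_mul_left _ _ two_ne_zero] at this
    linarith
  exact (Nat.cast_le.2 (coverNumLoc_le_of_forall fun x hx =>
    Nat.le_floor (hball x hx))).trans (Nat.floor_le (by positivity))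

end RealLine

section Dimensions

variable {X : Type*} [PseudoMetricSpace X]

theorem hUpper_le {E : Set X} {δ α b c : ℝ} (hα : 0 ≤ α) (hb : 0 < b) (hc : 0 < c)
    (h : ∀ r R : ℝ, 0 < r → r ≤ R ^ (1 + δ) → R ^ (1 + δ) ≤ R → R ≤ b →
      (coverNumLoc E r R : ℝ) ≤ c * (R / r) ^ α) :
    hUpper E δ ≤ α :=
  csInf_le ⟨0, fun _ h => h.1⟩ ⟨hα, b, c, hb, hc, h⟩

theorem hUpper_le_one (E : Set ℝ) (δ : ℝ) : hUpper E δ ≤ 1 :=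
  hUpper_le zero_le_one one_pos two_pos fun _ _ hr h₁ h₂ _ => by
    simpa using coverNumLoc_le_two_mul_div E hr (h₁.trans h₂)

def LargeCoverScales (E : Set X) (δ κ b M : ℝ) : Set (ℝ × ℝ) :=
  {p | 0 < p.1 ∧ p.1 ≤ p.2 ^ (1 + δ) ∧ p.2 ≤ min b 1 ∧ M ≤ p.2 / p.1 ∧
    κ * (p.2 / p.1) ≤ coverNumLoc E p.1 p.2}

theorem hUpper_eq_one_of_largeCoverScales {E : Set ℝ} {δ κ : ℝ} (hδ : 0 ≤ δ) (hκ : 0 < κ)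
    (h : ∀ b > 0, ∀ M, (LargeCoverScales E δ κ b M).Nonempty) : hUpper E δ = 1 := by
  refine (hUpper_le_one E δ).antisymm (le_csInf ⟨1, zero_le_one, 1, 2, one_pos, two_pos,
    fun _ _ hr h₁ h₂ _ => by simpa using coverNumLoc_le_two_mul_div E hr (h₁.trans h₂)⟩ ?_)
  rintro α ⟨-, b, c, hb, -, hbound⟩
  by_contra! hα
  obtain ⟨M, hM⟩ := eventually_atTop.1
    ((tendsto_rpow_atTop (sub_pos.2 hα)).eventually_gt_atTop (c / κ))
  obtain ⟨⟨r, R⟩, hr, hrR, hRb, hMR, hcover⟩ := h b hb (max M 1)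
  set t := R / r
  have ht : 0 < t := one_pos.trans_le ((le_max_right _ _).trans hMR)
  have hR : 0 < R := by simpa [t, hr] using ht
  have hlt : c * t ^ α < κ * t := calc
    c * t ^ α = c / κ * t ^ α * κ := by field_simp
    _ < t ^ (1 - α) * t ^ α * κ := by
      gcongr; exact hM t ((le_max_left _ _).trans hMR)
    _ = κ * t := by rw [← Real.rpow_add ht, sub_add_cancel, Real.rpow_one, mul_comm]
  have hle := hbound r R hr hrR (Real.rpow_le_self_of_le_one hR.le
    (hRb.trans (min_le_right _ _)) (by linarith)) (hRb.trans (min_le_left _ _))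
  linarith

theorem hUpper_eq_zero_of_eventually_coverNum_le {E : Set X} {δ : ℝ} (hE : TotallyBounded E)
    (hδ : 0 < δ)
    (h : ∀ ε : ℝ, 0 < ε → ∀ᶠ r in 𝓝[>] 0, (coverNum E r : ℝ) ≤ (1 / r) ^ ε) : hUpper E δ = 0 := by
  refine le_antisymm (le_of_forall_pos_le_add fun α hα => ?_) (Real.sInf_nonneg fun _ h => h.1)
  obtain ⟨b, hb, hbN⟩ := mem_nhdsGT_iff_exists_Ioc_subset.1 (h (α * δ / (1 + δ)) (by positivity))
  refine (hUpper_le hα.le hb one_pos fun r R hr h₁ h₂ h₃ => ?_).trans_eq (zero_add α).symm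
  have hR : 0 < R := hr.trans_le (h₁.trans h₂)
  calc (coverNumLoc E r R : ℝ) ≤ coverNum E r := Nat.cast_le.2 (coverNumLoc_le_coverNum hE hr R)
    _ ≤ (1 / r) ^ (α * δ / (1 + δ)) := hbN ⟨hr, (h₁.trans h₂).trans h₃⟩
    _ ≤ 1 * (R / r) ^ α := by rw [one_mul]; exact one_div_rpow_le_div_rpow hr hR hδ.le hα.le h₁

theorem frequently_rpow_le_coverNum {E : Set X} {ε : ℝ} (hε : 0 ≤ ε) (h : ε < upperBoxDim E) :
    ∃ᶠ r in 𝓝[>] 0, (1 / r) ^ ε ≤ (coverNum E r : ℝ) := by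
  have hnonneg : ∀ᶠ r in 𝓝[>] (0 : ℝ), 0 ≤ Real.log (coverNum E r) / Real.log (1 / r) := by
    filter_upwards [Ioo_mem_nhdsGT one_pos] with r hr
    exact div_nonneg (Real.log_natCast_nonneg _) (Real.log_nonneg (one_le_one_div hr.1 hr.2.le))
  refine ((frequently_lt_of_lt_limsup (isCoboundedUnder_le_of_eventually_le _ hnonneg)
    h).and_eventually (Ioo_mem_nhdsGT one_pos)).mono fun r ⟨hlt, hr⟩ =>
      le_of_not_ge fun hN => hlt.not_ge ?_
  exact log_div_log_le_of_le_rpow (one_lt_one_div hr.1 hr.2) (Nat.cast_nonneg _) hε hN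

theorem eventually_coverNum_le_rpow {E : Set X} {ε : ℝ}
    (hbdd : IsBoundedUnder (· ≤ ·) (𝓝[>] 0) fun r => Real.log (coverNum E r) / Real.log (1 / r))
    (h : upperBoxDim E < ε) : ∀ᶠ r in 𝓝[>] 0, (coverNum E r : ℝ) ≤ (1 / r) ^ ε := by
  filter_upwards [eventually_lt_of_limsup_lt h hbdd, Ioo_mem_nhdsGT one_pos] with r hlt hr
  exact le_rpow_of_log_div_log_le (one_lt_one_div hr.1 hr.2) (Nat.cast_nonneg _) hlt.le

theorem isBoundedUnder_log_coverNum_div_log {E : Set ℝ} (hE : Bornology.IsBounded E) :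
    IsBoundedUnder (· ≤ ·) (𝓝[>] 0) fun r => Real.log (coverNum E r) / Real.log (1 / r) := by
  obtain ⟨ρ, hρ⟩ := hE.subset_closedBall 0
  have hsub : E ⊆ Icc (-|ρ|) |ρ| := by
    simpa [Real.closedBall_eq_Icc] using hρ.trans (closedBall_subset_closedBall (le_abs_self ρ))
  set K := |ρ| + 1
  have hK1 : 1 ≤ K := by linarith [abs_nonneg ρ]
  refine isBoundedUnder_of_eventually_le (a := 2) ?_
  filter_upwards [Ioo_mem_nhdsGT (by positivity : (0 : ℝ) < 1 / K)] with r ⟨hr, hrK⟩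
  have hKr : K < 1 / r := (lt_one_div hr (by positivity)).1 hrK
  refine log_div_log_le_of_le_rpow (by linarith) (Nat.cast_nonneg _) two_pos.le ?_
  calc (coverNum E r : ℝ) ≤ (|ρ| - -|ρ|) / (2 * r) + 1 :=
        coverNum_le_of_subset_Icc hr (by linarith [abs_nonneg ρ]) hsub
    _ = |ρ| * (1 / r) + 1 := by field_simp; ring
    _ ≤ K * (1 / r) := by linarith
    _ ≤ (1 / r) ^ (2 : ℝ) := by rw [Real.rpow_two, sq]; gcongr

theorem qADim_eq_one_of_hUpper_eq_one {E : Set ℝ} {δ : ℝ} (hδ : δ ∈ Ioo (0 : ℝ) 1)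
    (h : hUpper E δ = 1) : qADim E = 1 :=
  IsGreatest.csSup_eq ⟨⟨δ, hδ, h⟩, by rintro _ ⟨δ', -, rfl⟩; exact hUpper_le_one E δ'⟩

theorem qADim_eq_zero_of_hUpper_eq_zero {E : Set X} (h : ∀ δ ∈ Ioo (0 : ℝ) 1, hUpper E δ = 0) :
    qADim E = 0 := by
  rw [qADim, EqOn.image_eq (f₂ := fun _ => (0 : ℝ)) h, (nonempty_Ioo.2 zero_lt_one).image_const,
    csSup_singleton]

end Dimensions

structure HasDecreasingGaps (a : ℕ → ℝ) : Prop where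
  gap_pos : ∀ j, 0 < a j - a (j + 1)
  gap_antitone : Antitone fun j => a j - a (j + 1)

namespace HasDecreasingGaps

variable {a : ℕ → ℝ}

theorem strictAnti (ha : HasDecreasingGaps a) : StrictAnti a :=
  strictAnti_nat_of_succ_lt fun j => sub_pos.1 (ha.gap_pos j)

theorem range_subset_Icc (ha : HasDecreasingGaps a) (hbdd : BddBelow (range a)) :
    range a ⊆ Icc (⨅ j, a j) (a 0) := by
  rintro _ ⟨j, rfl⟩
  exact ⟨ciInf_le hbdd j, ha.strictAnti.antitone j.zero_le⟩

theorem totallyBounded_range (ha : HasDecreasingGaps a) (hbdd : BddBelow (range a)) :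
    TotallyBounded (range a) :=
  isCompact_Icc.totallyBounded.subset (ha.range_subset_Icc hbdd)

theorem tendsto_iInf (ha : HasDecreasingGaps a) (hbdd : BddBelow (range a)) :
    Tendsto a atTop (𝓝 (⨅ j, a j)) :=
  tendsto_atTop_ciInf ha.strictAnti.antitone hbdd

theorem exists_gap_threshold (ha : HasDecreasingGaps a) (hbdd : BddBelow (range a)) {r : ℝ}
    (hr : 0 < r) : ∃ m, (∀ j < m, r < a j - a (j + 1)) ∧ ∀ j, m ≤ j → a j - a (j + 1) ≤ r := by
  have hgap : Tendsto (fun j => a j - a (j + 1)) atTop (𝓝 0) := by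
    simpa using (ha.tendsto_iInf hbdd).sub ((ha.tendsto_iInf hbdd).comp (tendsto_add_atTop_nat 1))
  have hex : ∃ j, a j - a (j + 1) ≤ r := (hgap.eventually (ge_mem_nhds hr)).exists
  classical
  exact ⟨Nat.find hex, fun j hj => not_le.1 (Nat.find_min hex hj),
    fun j hj => (ha.gap_antitone hj).trans (Nat.find_spec hex)⟩

theorem exists_mem_Icc_of_gap_le (ha : HasDecreasingGaps a) (hbdd : BddBelow (range a))
    {r y : ℝ} {m : ℕ} (hr : 0 < r) (htail : ∀ j, m ≤ j → a j - a (j + 1) ≤ r)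
    (hy : y ∈ Icc (⨅ j, a j) (a m)) : ∃ j, m ≤ j ∧ a j ∈ Icc y (y + r) := by
  have hex : ∃ k, a (m + k) ≤ y + r := by
    obtain ⟨k, hk⟩ := eventually_atTop.1 ((ha.tendsto_iInf hbdd).eventually
      (gt_mem_nhds (show ⨅ j, a j < y + r by linarith [hy.1])))
    exact ⟨k, (hk (m + k) (by omega)).le⟩
  classical
  refine ⟨m + Nat.find hex, by omega, ?_, Nat.find_spec hex⟩
  rcases hk : Nat.find hex with _ | k
  · simpa using hy.2
  · have hprev : y + r < a (m + k) := not_le.1 (Nat.find_min hex (by omega))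
    have := htail (m + k) (by omega)
    rw [← add_assoc]
    linarith

theorem coverNum_range_le (ha : HasDecreasingGaps a) (hbdd : BddBelow (range a)) {r : ℝ}
    (hr : 0 < r) (m : ℕ) :
    (coverNum (range a) r : ℝ) ≤ m + 2 + (a m - ⨅ j, a j) / (2 * r) := by
  classical
  set S := (Finset.range (m + 1)).image a
  have hsub : range a ⊆ ↑S ∪ Icc (⨅ j, a j) (a m) := by
    rintro _ ⟨j, rfl⟩
    rcases le_or_gt j m with hj | hj
    · exact Or.inl (Finset.mem_coe.2 (Finset.mem_image_of_mem a (Finset.mem_range.2 (by omega))))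
    · exact Or.inr ⟨ciInf_le hbdd j, ha.strictAnti.antitone hj.le⟩
  have hSb := S.finite_toSet.isCompact.totallyBounded
  have hIb := (isCompact_Icc (a := ⨅ j, a j) (b := a m)).totallyBounded
  have hN := (coverNum_mono hsub (hSb.union hIb) hr).trans (coverNum_union_le hSb hIb hr)
  have hS : coverNum (S : Set ℝ) r ≤ m + 1 :=
    (coverNum_finset_le S hr.le).trans (Finset.card_image_le.trans (by simp))
  calc (coverNum (range a) r : ℝ)
      ≤ coverNum (S : Set ℝ) r + coverNum (Icc (⨅ j, a j) (a m)) r := by exact_mod_cast hN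
    _ ≤ (m + 1) + ((a m - ⨅ j, a j) / (2 * r) + 1) :=
        add_le_add (by exact_mod_cast hS)
          (coverNum_le_of_subset_Icc hr (ciInf_le hbdd m) subset_rfl)
    _ = m + 2 + (a m - ⨅ j, a j) / (2 * r) := by ring

theorem div_le_coverNumLoc_of_gap_le (ha : HasDecreasingGaps a) (hbdd : BddBelow (range a))
    {r R : ℝ} {m : ℕ} (hr : 0 < r) (htail : ∀ j, m ≤ j → a j - a (j + 1) ≤ r)
    (hR : R ≤ a m - ⨅ j, a j) : R / (4 * r) ≤ coverNumLoc (range a) r R := by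
  have hE := ha.totallyBounded_range hbdd
  have hdense : ∀ y ∈ Icc (a m - R) (a m), ∃ z ∈ range a ∩ closedBall (a m) R, dist y z ≤ r := by
    rintro y ⟨hy₁, hy₂⟩
    obtain ⟨j, hj, hj₁, hj₂⟩ := ha.exists_mem_Icc_of_gap_le hbdd hr htail ⟨by linarith, hy₂⟩
    have hjm : a j ≤ a m := ha.strictAnti.antitone hj
    refine ⟨a j, ⟨mem_range_self j, ?_⟩, ?_⟩
    · rw [mem_closedBall, Real.dist_eq, abs_le]; constructor <;> linarith
    · rw [Real.dist_eq, abs_le]; constructor <;> linarith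
  have hcover := sub_le_coverNum_mul_of_dense (hE.subset inter_subset_left) hr hdense
  have hloc := coverNum_le_coverNumLoc hE hr (mem_range_self m) R
  rw [div_le_iff₀ (by positivity)]
  calc R = a m - (a m - R) := by ring
    _ ≤ _ := hcover
    _ ≤ _ := by gcongr

theorem gap_le_sub (ha : HasDecreasingGaps a) {i j k : ℕ} (hij : i < j) (hjk : j ≤ k + 1) :
    a k - a (k + 1) ≤ a i - a j := by
  obtain ⟨j, rfl⟩ : ∃ j', j = j' + 1 := ⟨j - 1, by omega⟩
  have h₁ : a k - a (k + 1) ≤ a j - a (j + 1) := ha.gap_antitone (by omega)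
  have h₂ : a j ≤ a i := ha.strictAnti.antitone (by omega)
  linarith

theorem mul_gap_le_sub (ha : HasDecreasingGaps a) (p n : ℕ) :
    n * (a (p + n) - a (p + n + 1)) ≤ a p - a (p + n) := by
  have := Finset.card_nsmul_le_sum (Finset.range n) (fun t => a (p + t) - a (p + t + 1))
    (a (p + n) - a (p + n + 1)) fun t ht => ha.gap_antitone (by simp at ht; omega)
  rwa [Finset.card_range, nsmul_eq_mul, ← sub_eq_sum_gap] at this

theorem sub_le_mul_gap (ha : HasDecreasingGaps a) (p n : ℕ) :
    a p - a (p + n) ≤ n * (a p - a (p + 1)) := by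
  have := Finset.sum_le_card_nsmul (Finset.range n) (fun t => a (p + t) - a (p + t + 1))
    (a p - a (p + 1)) fun t _ => ha.gap_antitone (Nat.le_add_right p t)
  rwa [Finset.card_range, nsmul_eq_mul, ← sub_eq_sum_gap] at this
theorem card_le_coverNumLoc_block (ha : HasDecreasingGaps a) (hbdd : BddBelow (range a))
    (p n : ℕ) :
    n + 1 ≤ coverNumLoc (range a) ((a (p + n) - a (p + n + 1)) / 3) (a p - a (p + n)) := by
  set g := a (p + n) - a (p + n + 1)
  have hg : 0 < g := ha.gap_pos (p + n)
  have hE := ha.totallyBounded_range hbdd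
  set T := (Finset.range (n + 1)).image fun t => a (p + t)
  have hT : T.card = n + 1 := by
    rw [Finset.card_image_of_injective _ (show Function.Injective fun t => a (p + t) from
      ha.strictAnti.injective.comp (add_right_injective p)), Finset.card_range]
  have hTball : ↑T ⊆ range a ∩ closedBall (a p) (a p - a (p + n)) := by
    simp only [T, Finset.coe_image, Finset.coe_range, image_subset_iff]
    intro t ht
    have h₁ : a (p + t) ≤ a p := ha.strictAnti.antitone (by omega)
    have h₂ : a (p + n) ≤ a (p + t) := ha.strictAnti.antitone (by simp at ht; omega)
    refine ⟨mem_range_self _, ?_⟩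
    rw [mem_closedBall, Real.dist_eq, abs_le]
    constructor <;> linarith
  have hsep : ∀ s t, s < t → t < n + 1 → 2 * (g / 3) < dist (a (p + s)) (a (p + t)) := by
    intro s t hst ht
    have := ha.gap_le_sub (i := p + s) (j := p + t) (k := p + n) (by omega) (by omega)
    rw [Real.dist_eq, abs_of_pos (by linarith)]
    linarith
  have hpair : (T : Set ℝ).Pairwise fun x y => 2 * (g / 3) < dist x y := by
    simp only [T, Finset.coe_image, Finset.coe_range]
    rintro _ ⟨s, hs, rfl⟩ _ ⟨t, ht, rfl⟩ hne
    rcases lt_or_gt_of_ne (fun h : s = t => hne (by rw [h])) with hlt | hlt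
    · exact hsep s t hlt ht
    · rw [dist_comm]; exact hsep t s hlt hs
  exact (hT ▸ card_le_coverNum_of_pairwise (hE.subset inter_subset_left) (by positivity) hTball
    hpair).trans (coverNum_le_coverNumLoc hE (by positivity) (mem_range_self p) _)

theorem exists_block_gap_le (ha : HasDecreasingGaps a) {r C : ℝ} {I m : ℕ} (hC : 0 < C)
    (hgap : ∀ j < m, r < a j - a (j + 1)) (hIm : 4 ^ I < m) (hCI : a 0 - a 1 ≤ C ^ I * r) :
    ∃ n, 2 ^ I ≤ n ∧ r < a (n + n) - a (n + n + 1) ∧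
      a n - a (n + 1) ≤ C * (a (n + n) - a (n + n + 1)) := by
  have hdouble : ∀ i, 2 ^ (i + 1) = 2 ^ i + 2 ^ i := fun i => by ring
  have hlast : r < a (2 ^ (I + I)) - a (2 ^ (I + I) + 1) :=
    hgap _ (by rwa [← two_mul, pow_mul])
  obtain ⟨i, hIi, hiI, hi⟩ := exists_le_mul_succ_of_lt_pow_mul
    (f := fun i => a (2 ^ i) - a (2 ^ i + 1)) hC.le (i₀ := I) (k := I) <| calc
      a (2 ^ I) - a (2 ^ I + 1) ≤ a 0 - a 1 := ha.gap_antitone (Nat.zero_le _)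
      _ ≤ C ^ I * r := hCI
      _ < C ^ I * (a (2 ^ (I + I)) - a (2 ^ (I + I) + 1)) := by gcongr
  refine ⟨2 ^ i, Nat.pow_le_pow_right two_pos hIi, ?_, by simpa [hdouble] using hi⟩
  rw [← hdouble]
  refine hgap _ (lt_of_le_of_lt ?_ hIm)
  calc 2 ^ (i + 1) ≤ 2 ^ (I + I) := Nat.pow_le_pow_right two_pos (by omega)
    _ = 4 ^ I := by rw [← two_mul, pow_mul]; norm_num

theorem largeCoverScales_nonempty_of_block (ha : HasDecreasingGaps a) (hbdd : BddBelow (range a))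
    {δ C κ b M : ℝ} {n J : ℕ} (hδ : 0 ≤ δ)
    (hratio : a n - a (n + 1) ≤ C * (a (n + n) - a (n + n + 1)))
    (hn : (1 / (a (n + n) - a (n + n + 1))) ^ δ ≤ n)
    (hJ : ∀ j, J ≤ j → a j - ⨅ i, a i ≤ min b 1) (hJn : J ≤ n) (hMn : M ≤ n)
    (hκ : 0 ≤ κ) (hκC : κ * (3 * C) ≤ 1) :
    (LargeCoverScales (range a) δ κ b M).Nonempty := by
  set g := a (n + n) - a (n + n + 1)
  set R := a n - a (n + n)
  have hg : 0 < g := ha.gap_pos _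
  have hn1 : (1 : ℝ) ≤ n := by
    have : (0 : ℝ) < n := (by positivity : (0 : ℝ) < (1 / g) ^ δ).trans_le hn
    exact_mod_cast Nat.one_le_iff_ne_zero.2 (by exact_mod_cast this.ne')
  have hRlo : n * g ≤ R := ha.mul_gap_le_sub n n
  have hRhi : R ≤ 3 * C * n * (g / 3) := by
    have := ha.sub_le_mul_gap n n
    nlinarith
  have hRg : 3 * n ≤ R / (g / 3) := by rw [le_div_iff₀ (by positivity)]; linarith
  refine ⟨(g / 3, R), by positivity, ?_, ?_, by simp only; linarith, ?_⟩
  · have hng : 1 ≤ n * g ^ δ := by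
      rwa [one_div, Real.inv_rpow hg.le, inv_le_iff_one_le_mul₀ (by positivity)] at hn
    have hnδ : 1 ≤ (n : ℝ) ^ δ := Real.one_le_rpow hn1 hδ
    calc g / 3 ≤ g := by linarith
      _ ≤ g * (n * g ^ δ * n ^ δ) :=
          le_mul_of_one_le_right hg.le (one_le_mul_of_one_le_of_one_le hng hnδ)
      _ = (n * g) ^ (1 + δ) := by
          rw [Real.rpow_add (by positivity), Real.rpow_one, Real.mul_rpow (by positivity) hg.le]
          ring
      _ ≤ R ^ (1 + δ) := Real.rpow_le_rpow (by positivity) hRlo (by linarith)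
  · have h₁ := hJ n hJn
    have h₂ : ⨅ i, a i ≤ a (n + n) := ciInf_le hbdd _
    simp only
    linarith
  · calc κ * (R / (g / 3)) ≤ κ * (3 * C * n) := by
          gcongr; rwa [div_le_iff₀ (by positivity)]
      _ ≤ n := by nlinarith
      _ ≤ coverNumLoc (range a) (g / 3) R := by
          exact_mod_cast (Nat.le_succ n).trans (ha.card_le_coverNumLoc_block hbdd n n)

theorem largeCoverScales_nonempty_of_many_gaps (ha : HasDecreasingGaps a)
    (hbdd : BddBelow (range a)) {ε r b M : ℝ} {m J : ℕ} (hε : 0 < ε) (hr : 0 < r)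
    (hgap : ∀ j < m, r < a j - a (j + 1)) (hm : (1 / r) ^ ε / 4 ≤ m)
    (hJ : ∀ j, J ≤ j → a j - ⨅ i, a i ≤ min b 1)
    (hy : max 5 (max (J : ℝ) M) ≤ (1 / r) ^ (ε / 4)) (h01 : a 0 - a 1 ≤ 1 / r) :
    (LargeCoverScales (range a) (ε / 4) (1 / (4 * 2 ^ (8 / ε))) b M).Nonempty := by
  set x := 1 / r
  set C : ℝ := 2 ^ (8 / ε)
  have hC : 1 ≤ C := Real.one_le_rpow one_le_two (by positivity)
  obtain ⟨I, hyI, hIx, hxC⟩ :=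
    exists_pow_two_scale hε (by positivity) ((le_max_left _ _).trans hy)
  have hIm : 4 ^ I < m := by exact_mod_cast hIx.trans_le hm
  have hCI : a 0 - a 1 ≤ C ^ I * r := calc
    a 0 - a 1 ≤ x := h01
    _ = x ^ (2 : ℝ) * r := by rw [Real.rpow_two, sq, mul_assoc, one_div_mul_cancel hr.ne', mul_one]
    _ ≤ C ^ I * r := by gcongr
  obtain ⟨n, hIn, hgn, hratio⟩ := ha.exists_block_gap_le (by positivity) hgap hIm hCI
  have hyn : x ^ (ε / 4) ≤ n := hyI.trans (by exact_mod_cast hIn)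
  refine ha.largeCoverScales_nonempty_of_block hbdd (by positivity) hratio ?_ hJ ?_ ?_
    (by positivity) ?_
  · calc (1 / (a (n + n) - a (n + n + 1))) ^ (ε / 4) ≤ x ^ (ε / 4) :=
          Real.rpow_le_rpow (by have := ha.gap_pos (n + n); positivity)
            (one_div_le_one_div_of_le hr hgn.le) (by positivity)
      _ ≤ n := hyn
  · exact_mod_cast ((le_max_left _ _).trans ((le_max_right _ _).trans hy)).trans hyn
  · exact ((le_max_right _ _).trans ((le_max_right _ _).trans hy)).trans hyn
  · field_simp
    linarith

theorem largeCoverScales_nonempty_of_long_tail (ha : HasDecreasingGaps a)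
    (hbdd : BddBelow (range a))
    {ε r κ b M : ℝ} {m : ℕ} (hε : 0 ≤ ε) (hr : 0 < r) (hr1 : r ≤ 1)
    (htail : ∀ j, m ≤ j → a j - a (j + 1) ≤ r) (hlong : r ^ (1 - ε) ≤ a m - ⨅ j, a j)
    (hb : r ^ (1 - ε / 2) ≤ min b 1) (hM : M ≤ (1 / r) ^ (ε / 2)) (hκ : κ ≤ 1 / 4) :
    (LargeCoverScales (range a) (ε / 4) κ b M).Nonempty := by
  set R := r ^ (1 - ε / 2)
  have hRr : R / r = (1 / r) ^ (ε / 2) := by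
    rw [← Real.rpow_sub_one hr.ne', one_div, Real.inv_rpow hr.le, ← Real.rpow_neg hr.le]
    ring_nf
  refine ⟨(r, R), hr, ?_, hb, hRr ▸ hM, ?_⟩
  · calc r = r ^ (1 : ℝ) := (Real.rpow_one r).symm
      _ ≤ r ^ ((1 - ε / 2) * (1 + ε / 4)) :=
          Real.rpow_le_rpow_of_exponent_ge hr hr1 (by nlinarith)
      _ = R ^ (1 + ε / 4) := Real.rpow_mul hr.le _ _
  · have hN := ha.div_le_coverNumLoc_of_gap_le hbdd hr htail
      ((Real.rpow_le_rpow_of_exponent_ge (y := 1 - ε / 2) (z := 1 - ε) hr hr1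
        (by linarith)).trans hlong)
    calc κ * (R / r) ≤ 1 / 4 * (R / r) := mul_le_mul_of_nonneg_right hκ (by positivity)
      _ = R / (4 * r) := by ring
      _ ≤ _ := hN

theorem hUpper_range_eq_one (ha : HasDecreasingGaps a) (hbdd : BddBelow (range a)) {ε : ℝ}
    (hε : 0 < ε) (hε2 : ε < 2)
    (hfreq : ∃ᶠ r in 𝓝[>] 0, (1 / r) ^ ε ≤ (coverNum (range a) r : ℝ)) :
    hUpper (range a) (ε / 4) = 1 := by
  have hC : (1 : ℝ) ≤ 2 ^ (8 / ε) := Real.one_le_rpow one_le_two (by positivity)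
  refine hUpper_eq_one_of_largeCoverScales (κ := 1 / (4 * 2 ^ (8 / ε))) (by positivity)
    (by positivity) fun b hb M => ?_
  obtain ⟨J, hJ⟩ := eventually_atTop.1 ((ha.tendsto_iInf hbdd).eventually
    (Iic_mem_nhds (lt_add_of_pos_right (⨅ i, a i) (lt_min hb one_pos))))
  replace hJ : ∀ j, J ≤ j → a j - ⨅ i, a i ≤ min b 1 := fun j hj => sub_le_iff_le_add'.2 (hJ j hj)
  have hRsmall : ∀ᶠ r in 𝓝[>] (0 : ℝ), r ^ (1 - ε / 2) ≤ min b 1 := by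
    have := (Real.continuousAt_rpow_const 0 (1 - ε / 2) (Or.inr (by linarith))).tendsto
    rw [Real.zero_rpow (by linarith)] at this
    exact (this.mono_left nhdsWithin_le_nhds).eventually (Iic_mem_nhds (lt_min hb one_pos))
  have hsmall : ∀ᶠ r in 𝓝[>] (0 : ℝ), r ∈ Ioo 0 1 ∧ 8 ≤ (1 / r) ^ ε ∧
      r ^ (1 - ε / 2) ≤ min b 1 ∧ M ≤ (1 / r) ^ (ε / 2) ∧
      max 5 (max (J : ℝ) M) ≤ (1 / r) ^ (ε / 4) ∧ a 0 - a 1 ≤ 1 / r := by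
    filter_upwards [Ioo_mem_nhdsGT one_pos, eventually_le_one_div_rpow hε 8, hRsmall,
      eventually_le_one_div_rpow (half_pos hε) M,
      eventually_le_one_div_rpow (by positivity : 0 < ε / 4) (max 5 (max (J : ℝ) M)),
      eventually_le_one_div_rpow one_pos (a 0 - a 1)] with r h₁ h₂ h₃ h₄ h₅ h₆
    exact ⟨h₁, h₂, h₃, h₄, h₅, by simpa using h₆⟩
  obtain ⟨r, hN, ⟨hr, hr1⟩, h8, hRb, hM, hy, h01⟩ := (hfreq.and_eventually hsmall).exists
  obtain ⟨m, hgap, htail⟩ := ha.exists_gap_threshold hbdd hr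
  rcases lt_or_ge (m : ℝ) ((1 / r) ^ ε / 4) with hm | hm
  · refine ha.largeCoverScales_nonempty_of_long_tail hbdd hε.le hr hr1.le htail ?_ hRb hM
      (one_div_le_one_div_of_le (by norm_num) (by linarith))
    have hcov := ha.coverNum_range_le hbdd hr m
    have hrε : r ^ (1 - ε) = (1 / r) ^ ε / 2 * (2 * r) := by
      rw [Real.rpow_sub hr, Real.rpow_one, Real.div_rpow zero_le_one hr.le, Real.one_rpow]
      field_simp
    rw [hrε, ← le_div_iff₀ (by positivity)]
    linarith
  · exact ha.largeCoverScales_nonempty_of_many_gaps hbdd hε hr hgap hm hJ hy h01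

end HasDecreasingGaps

/-- For a sequence in `[0,1]` with positive nonincreasing gaps, the quasi-Assouad dimension
of its range is `1` when the upper box dimension is positive, and `0` otherwise. -/
theorem qADim_decreasing_gaps_dichotomy
    (a : ℕ → ℝ) (hmem : ∀ j, a j ∈ Set.Icc (0:ℝ) 1)
    (hpos : ∀ j, 0 < a j - a (j+1))
    (hdec : ∀ j, a (j+1) - a (j+2) ≤ a j - a (j+1))
    (E : Set ℝ) (hE : E = Set.range a) :
    (0 < upperBoxDim E → qADim E = 1) ∧ (upperBoxDim E = 0 → qADim E = 0) := by
  subst hE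
  have ha : HasDecreasingGaps a := ⟨hpos, antitone_nat_of_succ_le hdec⟩
  have hsub : range a ⊆ Icc 0 1 := range_subset_iff.2 hmem
  refine ⟨fun hdim => ?_, fun hdim => ?_⟩
  · set ε := min (upperBoxDim (range a) / 2) 1
    have hε : 0 < ε := lt_min (half_pos hdim) one_pos
    have hεdim : ε < upperBoxDim (range a) := (min_le_left _ _).trans_lt (half_lt_self hdim)
    have hε1 : ε ≤ 1 := min_le_right _ _
    exact qADim_eq_one_of_hUpper_eq_one ⟨by positivity, by linarith⟩
      (ha.hUpper_range_eq_one ⟨0, fun _ hx => (hsub hx).1⟩ hε (by linarith)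
        (frequently_rpow_le_coverNum hε.le hεdim))
  · have hbdd := isBoundedUnder_log_coverNum_div_log ((isBounded_Icc (0 : ℝ) 1).subset hsub)
    exact qADim_eq_zero_of_hUpper_eq_zero fun δ hδ =>
      hUpper_eq_zero_of_eventually_coverNum_le (isCompact_Icc.totallyBounded.subset hsub) hδ.1
        fun ε hε => eventually_coverNum_le_rpow hbdd (hdim ▸ hε)
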